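/- Let r ≥ 2 and let ω_1, …, ω_r be complex numbers with Re(ω_j) > 0 for all j. Then for every complex number s with Re(s) > 1, Z(s,(ω_1,…,ω_r)) = ∏_{n=0}^∞ Z(s + n·ω_r, (ω_1,…,ω_{r-1})), where the family (Z(s+n·ω_r,(ω_1,…,ω_{r-1})))_{n∈ℕ} is multipliable. -/

import Mathlib

/-!
Write `ζ(w) = 1 + (ζ(w) - 1)`. For `σ ≤ Re w` with `σ > 1`, comparing `n ^ (-Re w)` with
`n ^ (-σ) 2 ^ (σ - Re w)` for `n ≥ 2` gives `‖ζ(w) - 1‖ ≤ C_σ 2 ^ (σ - Re w)`. At the lattice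
point `w = s + ∑ mⱼ ωⱼ` this bound is a product of geometric terms `(2 ^ (-Re ωⱼ)) ^ mⱼ`, which is
summable over `ℕ^r`, so the product defining the higher zeta function converges absolutely. Peeling
off the last coordinate is then the fiberwise evaluation of a convergent product, every fiber
being again a higher zeta product.
-/

theorem summable_pi_prod_of_nonneg {ι : Type*} [Fintype ι] {κ : ι → Type*} {f : ∀ i, κ i → ℝ}
    (hf0 : ∀ i k, 0 ≤ f i k) (hf : ∀ i, Summable (f i)) :
    Summable fun x : (∀ i, κ i) => ∏ i, f i (x i) := by
  classical
  refine summable_of_sum_le (c := ∏ i, ∑' k, f i k)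
    (fun x => Finset.prod_nonneg fun i _ => hf0 i (x i)) fun u => ?_
  calc ∑ x ∈ u, ∏ i, f i (x i)
      ≤ ∑ x ∈ Fintype.piFinset fun i => u.image (· i), ∏ i, f i (x i) :=
        Finset.sum_le_sum_of_subset_of_nonneg
          (fun x hx => Fintype.mem_piFinset.mpr fun i => Finset.mem_image_of_mem _ hx)
          (fun x _ _ => Finset.prod_nonneg fun i _ => hf0 i (x i))
    _ = ∏ i, ∑ k ∈ u.image (· i), f i k := (Finset.prod_univ_sum _ _).symm
    _ ≤ ∏ i, ∑' k, f i k :=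
        Finset.prod_le_prod (fun i _ => Finset.sum_nonneg fun k _ => hf0 i k)
          fun i _ => (hf i).sum_le_tsum _ fun k _ => hf0 i k

theorem riemannZeta_sub_one_eq_tsum {w : ℂ} (hw : 1 < w.re) :
    riemannZeta w - 1 = ∑' n : ℕ, 1 / ((n + 2 : ℕ) : ℂ) ^ w := by
  have hw0 : w ≠ 0 := by rintro rfl; norm_num at hw
  rw [zeta_eq_tsum_one_div_nat_cpow hw,
    ← (Complex.summable_one_div_nat_cpow.mpr hw).sum_add_tsum_nat_add 2]
  simp [Finset.sum_range_succ, Complex.zero_cpow hw0]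

theorem norm_riemannZeta_sub_one_le {σ : ℝ} (hσ : 1 < σ) {w : ℂ} (hw : σ ≤ w.re) :
    ‖riemannZeta w - 1‖ ≤ (∑' n : ℕ, ((n + 2 : ℕ) : ℝ) ^ (-σ)) * 2 ^ (σ - w.re) := by
  have hsum : Summable fun n : ℕ => ((n + 2 : ℕ) : ℝ) ^ (-σ) :=
    (summable_nat_add_iff 2).mpr (Real.summable_nat_rpow.mpr (by linarith))
  rw [riemannZeta_sub_one_eq_tsum (hσ.trans_le hw), ← tsum_mul_right]
  refine tsum_of_norm_bounded (hsum.mul_right _).hasSum fun n => ?_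
  have hn : (2 : ℝ) ≤ ((n + 2 : ℕ) : ℝ) := by push_cast; linarith [n.cast_nonneg (α := ℝ)]
  have hn0 : (0 : ℝ) < ((n + 2 : ℕ) : ℝ) := two_pos.trans_le hn
  calc ‖1 / ((n + 2 : ℕ) : ℂ) ^ w‖ = ((n + 2 : ℕ) : ℝ) ^ (-σ) * ((n + 2 : ℕ) : ℝ) ^ (σ - w.re) := by
        rw [norm_div, norm_one, Complex.norm_natCast_cpow_of_pos (by omega), ← Real.rpow_add hn0,
          one_div, ← Real.rpow_neg hn0.le]
        ring_nf
    _ ≤ ((n + 2 : ℕ) : ℝ) ^ (-σ) * 2 ^ (σ - w.re) :=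
        mul_le_mul_of_nonneg_left (Real.rpow_le_rpow_of_nonpos two_pos hn (by linarith))
          (by positivity)

theorem multipliable_riemannZeta_lattice {ι : Type*} [Fintype ι] (ω : ι → ℂ)
    (hω : ∀ j, 0 < (ω j).re) {s : ℂ} (hs : 1 < s.re) :
    Multipliable fun m : ι → ℕ => riemannZeta (s + ∑ j, (m j : ℂ) * ω j) := by
  set q : ι → ℝ := fun j => (2 : ℝ) ^ (-(ω j).re)
  have hre (m : ι → ℕ) : (s + ∑ j, (m j : ℂ) * ω j).re = s.re + ∑ j, (m j : ℝ) * (ω j).re := by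
    simp [Complex.re_sum]
  have hge (m : ι → ℕ) : s.re ≤ (s + ∑ j, (m j : ℂ) * ω j).re := by
    rw [hre]
    exact le_add_of_nonneg_right (Finset.sum_nonneg fun j _ => by have := hω j; positivity)
  have hdecay (m : ι → ℕ) : (2 : ℝ) ^ (s.re - (s + ∑ j, (m j : ℂ) * ω j).re) = ∏ j, q j ^ m j := by
    rw [hre, sub_add_cancel_left, ← Finset.sum_neg_distrib, Real.rpow_sum_of_pos two_pos]
    refine Finset.prod_congr rfl fun j _ => ?_
    rw [← Real.rpow_natCast, ← Real.rpow_mul two_pos.le]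
    ring_nf
  have hq : Summable fun m : ι → ℕ => ∏ j, q j ^ m j :=
    summable_pi_prod_of_nonneg (fun j n => by positivity) fun j =>
      summable_geometric_of_lt_one (by positivity)
        (Real.rpow_lt_one_of_one_lt_of_neg one_lt_two (neg_lt_zero.mpr (hω j)))
  have hsub : Summable fun m : ι → ℕ => riemannZeta (s + ∑ j, (m j : ℂ) * ω j) - 1 :=
    (hq.mul_left _).of_norm_bounded fun m => hdecay m ▸ norm_riemannZeta_sub_one_le hs (hge m)
  simpa using Complex.multipliable_one_add_of_summable hsub

theorem higherRiemannZeta_lattice_peel_general (r : ℕ) (ω : Fin (r + 1) → ℂ)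
    (hω : ∀ j, 0 < (ω j).re) (s : ℂ) (hs : 1 < s.re) :
    Multipliable (fun n : ℕ =>
      ∏' m : Fin r → ℕ,
        riemannZeta (s + (n : ℂ) * ω (Fin.last r) + ∑ j, (m j : ℂ) * ω j.castSucc)) ∧
    (∏' m : Fin (r + 1) → ℕ, riemannZeta (s + ∑ j, (m j : ℂ) * ω j)) =
      ∏' n : ℕ, ∏' m : Fin r → ℕ,
        riemannZeta (s + (n : ℂ) * ω (Fin.last r) + ∑ j, (m j : ℂ) * ω j.castSucc) := by
  have hfiber (n : ℕ) := multipliable_riemannZeta_lattice (fun j : Fin r => ω j.castSucc)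
    (fun j => hω _) (s := s + n * ω (Fin.last r)) <| by
      have := mul_nonneg n.cast_nonneg (hω (Fin.last r)).le
      simp only [Complex.add_re, Complex.mul_re, Complex.natCast_re, Complex.natCast_im, zero_mul,
        sub_zero]
      linarith
  have hsnoc (n : ℕ) (m : Fin r → ℕ) :
      s + ∑ j, ((Fin.snocEquiv (fun _ => ℕ) (n, m) j : ℕ) : ℂ) * ω j =
        s + n * ω (Fin.last r) + ∑ j, (m j : ℂ) * ω j.castSucc := by
    simp only [Fin.snocEquiv_apply, Fin.sum_univ_castSucc, Fin.snoc_castSucc, Fin.snoc_last]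
    ring
  have hprod := ((Fin.snocEquiv (fun _ => ℕ)).hasProd_iff.mpr
    (multipliable_riemannZeta_lattice ω hω hs).hasProd)
  simp only [Function.comp_def, hsnoc] at hprod
  have hpeel := hprod.prod_fiberwise fun n => (hfiber n).hasProd
  exact ⟨hpeel.multipliable, hpeel.tprod_eq.symm⟩

/-- For `r+1 ≥ 2` weights `ω₀,…,ω_r` with positive real parts and `Re s > 1`, the higher
Riemann zeta function of weight `(ω₀,…,ω_r)` factors as the product over `n ∈ ℕ` of the
higher Riemann zeta functions of weight `(ω₀,…,ω_{r-1})` at `s + n ω_r`, the latter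
family being multipliable. -/
theorem higherRiemannZeta_lattice_peel (r : ℕ) (hr : 1 ≤ r) (ω : Fin (r + 1) → ℂ)
    (hω : ∀ j, 0 < (ω j).re) (s : ℂ) (hs : 1 < s.re) :
    Multipliable (fun n : ℕ =>
      ∏' m : Fin r → ℕ,
        riemannZeta (s + (n : ℂ) * ω (Fin.last r) + ∑ j, (m j : ℂ) * ω j.castSucc)) ∧
    (∏' m : Fin (r + 1) → ℕ, riemannZeta (s + ∑ j, (m j : ℂ) * ω j)) =
      ∏' n : ℕ, ∏' m : Fin r → ℕ,
        riemannZeta (s + (n : ℂ) * ω (Fin.last r) + ∑ j, (m j : ℂ) * ω j.castSucc) :=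
  higherRiemannZeta_lattice_peel_general r ω hω s hs
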